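/- arXiv:1408.1805 — 5 statements merged into one kernel-verified Lean document; each statement's English description precedes it below -/
import Mathlib

section
/- Let γ be a convex closed plane curve with curvature k(θ) > 0 in the outward normal angle parameterization, length L, and enclosed area A. For every β ≥ 0: ∫₀^{2π} k^{β−1} dθ ≤ (L/(2π)) ∫₀^{2π} k^β dθ. -/
open MeasureTheory Real

/-!
Both `k ^ β` and `k⁻¹` are functions of `k`, the first increasing and the second decreasing,
so they are oppositely ordered and Chebyshev's integral inequality
`2π ∫ k ^ β k⁻¹ ≤ (∫ k ^ β) (∫ k⁻¹)` applies; its left side is `2π ∫ k ^ (β - 1)` and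
`∫ k⁻¹ = L`. Chebyshev's inequality itself is obtained by integrating the pointwise
rearrangement inequality `f x g x + f y g y ≤ f x g y + f y g x` in both variables.
-/

theorem Antivary.measureReal_univ_mul_integral_mul_le {α : Type*} [MeasurableSpace α]
    {μ : Measure α} [IsFiniteMeasure μ] {f g : α → ℝ} (hfg : Antivary f g)
    (hf : Integrable f μ) (hg : Integrable g μ) (hfg_int : Integrable (fun x => f x * g x) μ) :
    μ.real Set.univ * ∫ x, f x * g x ∂μ ≤ (∫ x, f x ∂μ) * ∫ x, g x ∂μ := by
  set If := ∫ x, f x ∂μ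
  set Ig := ∫ x, g x ∂μ
  set Ifg := ∫ x, f x * g x ∂μ
  have integrated_in_y : ∀ x, μ.real Set.univ * (f x * g x) + Ifg ≤ f x * Ig + g x * If := by
    intro x
    calc μ.real Set.univ * (f x * g x) + Ifg = ∫ y, (f x * g x + f y * g y) ∂μ := by
          rw [integral_add (integrable_const _) hfg_int, integral_const, smul_eq_mul]
      _ ≤ ∫ y, (f x * g y + f y * g x) ∂μ :=
          integral_mono ((integrable_const _).add hfg_int) ((hg.const_mul _).add (hf.mul_const _))
            fun y => hfg.mul_add_mul_le_mul_add_mul x y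
      _ = f x * Ig + g x * If := by
          rw [integral_add (hg.const_mul _) (hf.mul_const _), integral_const_mul,
            integral_mul_const, mul_comm If (g x)]
  have integrated_in_x : μ.real Set.univ * Ifg + μ.real Set.univ * Ifg ≤ If * Ig + Ig * If :=
    calc μ.real Set.univ * Ifg + μ.real Set.univ * Ifg
        = ∫ x, (μ.real Set.univ * (f x * g x) + Ifg) ∂μ := by
          rw [integral_add (hfg_int.const_mul _) (integrable_const _), integral_const_mul,
            integral_const, smul_eq_mul]
      _ ≤ ∫ x, (f x * Ig + g x * If) ∂μ :=
          integral_mono ((hfg_int.const_mul _).add (integrable_const _))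
            ((hf.mul_const _).add (hg.mul_const _)) integrated_in_y
      _ = If * Ig + Ig * If := by
          rw [integral_add (hf.mul_const _) (hg.mul_const _), integral_mul_const,
            integral_mul_const]
  linarith

theorem antivary_rpow_inv {ι : Type*} {k : ι → ℝ} (hk : ∀ i, 0 < k i) {β : ℝ} (hβ : 0 ≤ β) :
    Antivary (fun i => k i ^ β) (fun i => (k i)⁻¹) := fun i j hij =>
  rpow_le_rpow (hk j).le ((inv_lt_inv₀ (hk i) (hk j)).mp hij).le hβ

theorem stmt_11_general (k : ℝ → ℝ) (hk : Continuous k)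
    (hkpos : ∀ θ, 0 < k θ) (L : ℝ)
    (hL : L = ∫ θ in (0:ℝ)..(2 * Real.pi), (k θ)⁻¹) :
    ∀ β : ℝ, 0 ≤ β →
      (∫ θ in (0:ℝ)..(2 * Real.pi), k θ ^ (β - 1)) ≤
        (L / (2 * Real.pi)) * ∫ θ in (0:ℝ)..(2 * Real.pi), k θ ^ β := by
  intro β hβ
  have hk_ne (θ : ℝ) : k θ ≠ 0 := (hkpos θ).ne'
  have hpow : Continuous fun θ => k θ ^ β := hk.rpow_const fun θ => Or.inl (hk_ne θ)
  have hinv : Continuous fun θ => (k θ)⁻¹ := hk.inv₀ hk_ne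
  have chebyshev := (antivary_rpow_inv hkpos hβ).measureReal_univ_mul_integral_mul_le
    (μ := volume.restrict (Set.Ioc 0 (2 * π))) hpow.integrableOn_Ioc hinv.integrableOn_Ioc
    ((hpow.mul hinv).integrableOn_Ioc)
  simp only [measureReal_restrict_apply_univ, Real.volume_real_Ioc_of_le two_pi_pos.le,
    sub_zero] at chebyshev
  simp only [hL, intervalIntegral.integral_of_le two_pi_pos.le, rpow_sub_one (hk_ne _),
    div_eq_mul_inv]
  rw [mul_right_comm, ← div_eq_mul_inv, le_div_iff₀ two_pi_pos]
  linarith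

/-- For a convex closed curve with positive curvature `k(θ)` and length
`L = ∫₀^{2π} k⁻¹ dθ`, for every `β ≥ 0`:
`∫₀^{2π} k^(β−1) dθ ≤ (L/(2π)) ∫₀^{2π} k^β dθ`. -/
theorem stmt_11 (k : ℝ → ℝ) (hk : Continuous k)
    (hper : Function.Periodic k (2 * Real.pi))
    (hkpos : ∀ θ, 0 < k θ) (L : ℝ)
    (hL : L = ∫ θ in (0:ℝ)..(2 * Real.pi), (k θ)⁻¹) :
    ∀ β : ℝ, 0 ≤ β →
      (∫ θ in (0:ℝ)..(2 * Real.pi), k θ ^ (β - 1)) ≤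
        (L / (2 * Real.pi)) * ∫ θ in (0:ℝ)..(2 * Real.pi), k θ ^ β :=
  stmt_11_general k hk hkpos L hL
end

section
/- Let k : S¹ × [0,T) → (0,∞) be smooth and solve k_t = k²((k^α)_{θθ} + k^α − λ(t)) with λ(t) = (1/(2π))∫₀^{2π} k^α(θ,t) dθ and α > 0. Then the quantity Φ(θ,t) = 1/k(θ,t) − L(t)/(2π) − (1/(2π))∫₀^t∫₀^{2π} k^α dθ dσ, where L(t) = ∫₀^{2π} k(θ,t)^{-1} dθ, satisfies Φ_t = α k^{α+1} Φ_{θθ} − α(α+1) k^{α+2} Φ_θ² − k^α ≤ α k^{α+1} Φ_{θθ}. -/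
open MeasureTheory Real
open scoped ContDiff

/-- Evolution identity for `Φ = 1/k − L/(2π) − (1/(2π))∫₀ᵗ∫₀^{2π} k^α dθ dσ` under the
length-preserving `k^α`-flow `k_t = k²((k^α)_{θθ} + k^α − λ(t))`:
`Φ_t = α k^(α+1) Φ_{θθ} − α(α+1) k^(α+2) Φ_θ² − k^α ≤ α k^(α+1) Φ_{θθ}`. -/
theorem stmt_16 (α T : ℝ) (hα : 0 < α) (hT : 0 < T)
    (k : ℝ → ℝ → ℝ)
    (hsmooth : ContDiff ℝ (⊤ : ℕ∞) (fun p : ℝ × ℝ => k p.1 p.2))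
    (hper : ∀ t, Function.Periodic (fun θ => k θ t) (2 * Real.pi))
    (hkpos : ∀ θ t, 0 < k θ t)
    (lam : ℝ → ℝ)
    (hlam : ∀ t, lam t = (1 / (2 * Real.pi)) * ∫ θ in (0:ℝ)..(2 * Real.pi), k θ t ^ α)
    (hpde : ∀ θ : ℝ, ∀ t ∈ Set.Ico (0:ℝ) T,
      deriv (fun τ => k θ τ) t =
        (k θ t) ^ 2 * (deriv (deriv (fun x => k x t ^ α)) θ + k θ t ^ α - lam t))
    (L : ℝ → ℝ) (hL : ∀ t, L t = ∫ θ in (0:ℝ)..(2 * Real.pi), (k θ t)⁻¹)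
    (Φ : ℝ → ℝ → ℝ)
    (hΦ : ∀ θ t, Φ θ t = (k θ t)⁻¹ - L t / (2 * Real.pi) -
      (1 / (2 * Real.pi)) * ∫ σ in (0:ℝ)..t, ∫ x in (0:ℝ)..(2 * Real.pi), k x σ ^ α) :
    ∀ θ : ℝ, ∀ t ∈ Set.Ico (0:ℝ) T,
      deriv (fun τ => Φ θ τ) t =
          α * k θ t ^ (α + 1) * deriv (deriv (fun x => Φ x t)) θ -
            α * (α + 1) * k θ t ^ (α + 2) * (deriv (fun x => Φ x t) θ) ^ 2 -
            k θ t ^ α ∧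
        deriv (fun τ => Φ θ τ) t ≤
          α * k θ t ^ (α + 1) * deriv (deriv (fun x => Φ x t)) θ := by
  intro θ t ht
  have hπ : (0:ℝ) < 2 * Real.pi := by positivity
  have hkne : ∀ x s, k x s ≠ 0 := fun x s => (hkpos x s).ne'
  -- smooth sections
  have hsecθ : ∀ s : ℝ, ContDiff ℝ (⊤ : ℕ∞) (fun x => k x s) := fun s =>
    hsmooth.comp (contDiff_id.prodMk contDiff_const)
  have hsecτ : ∀ x : ℝ, ContDiff ℝ (⊤ : ℕ∞) (fun s => k x s) := fun x =>
    hsmooth.comp (contDiff_const.prodMk contDiff_id)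
  -- the time partial derivative, as a continuous function of both variables
  set kt : ℝ × ℝ → ℝ := fun p => fderiv ℝ (fun q : ℝ × ℝ => k q.1 q.2) p (0, 1) with hktdef
  have hktHas : ∀ x s : ℝ, HasDerivAt (fun τ => k x τ) (kt (x, s)) s := by
    intro x s
    have h1 : HasFDerivAt (fun q : ℝ × ℝ => k q.1 q.2)
        (fderiv ℝ (fun q : ℝ × ℝ => k q.1 q.2) (x, s)) (x, s) :=
      (hsmooth.differentiable (by simp) (x, s)).hasFDerivAt
    have h2 : HasDerivAt (fun τ => ((x, τ) : ℝ × ℝ)) ((0 : ℝ), (1 : ℝ)) s :=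
      (hasDerivAt_const s x).prodMk (hasDerivAt_id s)
    exact h1.comp_hasDerivAt s h2
  have hktcont : Continuous kt :=
    (hsmooth.continuous_fderiv (by simp)).clm_apply continuous_const
  -- time derivative of the inverse
  have hinvHas : ∀ x s : ℝ, HasDerivAt (fun τ => (k x τ)⁻¹) (-(kt (x, s)) / (k x s) ^ 2) s :=
    fun x s => (hktHas x s).inv (hkne x s)
  have hFcont : Continuous (fun p : ℝ × ℝ => -(kt p) / (k p.1 p.2) ^ 2) :=
    hktcont.neg.div (hsmooth.continuous.pow 2) (fun p => pow_ne_zero 2 (hkne p.1 p.2))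
  -- smoothness of the rpow section
  have hrpow : ∀ s : ℝ, ContDiff ℝ (⊤ : ℕ∞) (fun x => k x s ^ α) := by
    intro s
    rw [contDiff_iff_contDiffAt]
    exact fun x => ((hsecθ s).contDiffAt).rpow_const_of_ne (hkne x s)
  have hkacont : Continuous (fun p : ℝ × ℝ => k p.1 p.2 ^ α) :=
    hsmooth.continuous.rpow_const (fun p => Or.inl (hkne p.1 p.2))
  -- FTC-2 : the integral of (k^α)_θθ vanishes by periodicity
  have hg0 : ContDiff ℝ ∞ (fun y => k y t ^ α) := (hrpow t).of_le (by simp)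
  have hg1 : ContDiff ℝ ∞ (deriv (fun y => k y t ^ α)) := (contDiff_infty_iff_deriv.mp hg0).2
  have hAcont : Continuous (deriv (deriv (fun y => k y t ^ α))) :=
    ((contDiff_infty_iff_deriv.mp hg1).2).continuous
  have hAzero : ∫ x in (0:ℝ)..(2*Real.pi), deriv (deriv (fun y => k y t ^ α)) x = 0 := by
    have hdiff : ∀ x ∈ Set.uIcc (0:ℝ) (2*Real.pi),
        DifferentiableAt ℝ (deriv (fun y => k y t ^ α)) x :=
      fun x _ => ((contDiff_infty_iff_deriv.mp hg1).1 x)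
    rw [intervalIntegral.integral_deriv_eq_sub hdiff (hAcont.intervalIntegrable _ _)]
    -- periodicity of the first derivative
    have hgper : (fun y => k y t ^ α) = (fun y => k (y + 2*Real.pi) t ^ α) := by
      funext y; exact congrArg (fun z => z ^ α) (hper t y).symm
    have hshift : HasDerivAt (fun y : ℝ => y + 2*Real.pi) 1 (0:ℝ) :=
      (hasDerivAt_id (0:ℝ)).add_const _
    have hgd : HasDerivAt (fun y => k y t ^ α)
        (deriv (fun y => k y t ^ α) (0 + 2*Real.pi)) (0 + 2*Real.pi) :=
      (((hrpow t).differentiable (by simp)) _).hasDerivAt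
    have hcomp : HasDerivAt (fun y => k (y + 2*Real.pi) t ^ α)
        (deriv (fun y => k y t ^ α) (0 + 2*Real.pi) * 1) (0:ℝ) :=
      by have := HasDerivAt.comp (0:ℝ) hgd hshift; exact this
    rw [← hgper] at hcomp
    have : deriv (fun y => k y t ^ α) 0 = deriv (fun y => k y t ^ α) (0 + 2*Real.pi) * 1 :=
      hcomp.deriv
    rw [zero_add] at this
    rw [this]; ring
  -- the t-derivative of the inverse, rewritten via the PDE
  have hF't_eq : ∀ x : ℝ, -(kt (x, t)) / (k x t) ^ 2
      = -(deriv (deriv (fun y => k y t ^ α)) x + k x t ^ α - lam t) := by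
    intro x
    have h1 : kt (x, t) =
        (k x t) ^ 2 * (deriv (deriv (fun y => k y t ^ α)) x + k x t ^ α - lam t) := by
      rw [← (hktHas x t).deriv]; exact hpde x t ht
    rw [h1]
    field_simp [hkne x t]
  have hintka : IntervalIntegrable (fun x => k x t ^ α) volume 0 (2*Real.pi) :=
    ((hrpow t).continuous).intervalIntegrable _ _
  have hka_int : ∫ x in (0:ℝ)..(2*Real.pi), k x t ^ α = 2 * Real.pi * lam t := by
    rw [hlam t]; field_simp
  have hF'zero : ∫ x in (0:ℝ)..(2*Real.pi), -(kt (x, t)) / (k x t) ^ 2 = 0 := by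
    rw [intervalIntegral.integral_congr (g := fun x =>
      -(deriv (deriv (fun y => k y t ^ α)) x + k x t ^ α - lam t))
      (fun x _ => hF't_eq x)]
    have h1 : IntervalIntegrable (fun x => deriv (deriv (fun y => k y t ^ α)) x + k x t ^ α)
        volume 0 (2*Real.pi) := (hAcont.intervalIntegrable _ _).add hintka
    have h2 : (fun x : ℝ => -(deriv (deriv (fun y => k y t ^ α)) x + k x t ^ α - lam t))
        = fun x => -((deriv (deriv (fun y => k y t ^ α)) x + k x t ^ α) - (fun _ : ℝ => lam t) x) := by
      funext x; ring
    rw [h2, intervalIntegral.integral_neg,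
      intervalIntegral.integral_sub h1 (intervalIntegrable_const),
      intervalIntegral.integral_add (hAcont.intervalIntegrable _ _) hintka,
      hAzero, hka_int, intervalIntegral.integral_const]
    simp
  -- derivative of L is zero
  have hLderiv : HasDerivAt L 0 t := by
    have hLfun : L = fun s => ∫ x in (0:ℝ)..(2*Real.pi), (k x s)⁻¹ := funext hL
    rw [hLfun]
    obtain ⟨C, hC⟩ := ((isCompact_Icc (a := (0:ℝ)) (b := 2*Real.pi)).prod
      (isCompact_Icc (a := t-1) (b := t+1))).exists_bound_of_continuousOn hFcont.continuousOn
    have hres := (intervalIntegral.hasDerivAt_integral_of_dominated_loc_of_deriv_le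
      (F := fun s x => (k x s)⁻¹) (F' := fun s x => -(kt (x, s)) / (k x s) ^ 2)
      (x₀ := t) (a := (0:ℝ)) (b := 2*Real.pi) (bound := fun _ => C) (s := Metric.ball t 1) (μ := volume)
      (Metric.ball_mem_nhds t one_pos)
      (Filter.Eventually.of_forall fun s =>
        (((hsecθ s).continuous).inv₀ (fun x => hkne x s)).aestronglyMeasurable)
      ((((hsecθ t).continuous).inv₀ (fun x => hkne x t)).intervalIntegrable _ _)
      ((hFcont.comp (continuous_id.prodMk continuous_const)).aestronglyMeasurable)
      (Filter.Eventually.of_forall ?_)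
      intervalIntegrable_const
      (Filter.Eventually.of_forall fun x _ s _ => hinvHas x s)).2
    · rw [hF'zero] at hres
      exact hres
    · intro x hx s hs
      rw [Set.uIoc_of_le hπ.le] at hx
      rw [Real.ball_eq_Ioo] at hs
      exact hC (x, s) ⟨⟨hx.1.le, hx.2⟩, ⟨hs.1.le, hs.2.le⟩⟩
  -- derivative of the accumulated integral
  have hG : Continuous (fun s => ∫ x in (0:ℝ)..(2*Real.pi), k x s ^ α) := by
    apply intervalIntegral.continuous_parametric_intervalIntegral_of_continuous'
      (f := fun s x => k x s ^ α)
    exact hkacont.comp continuous_swap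
  have hIderiv : HasDerivAt (fun s => ∫ σ in (0:ℝ)..s, ∫ x in (0:ℝ)..(2*Real.pi), k x σ ^ α)
      (∫ x in (0:ℝ)..(2*Real.pi), k x t ^ α) t :=
    intervalIntegral.integral_hasDerivAt_right (hG.intervalIntegrable _ _)
      (hG.stronglyMeasurableAtFilter _ _) hG.continuousAt
  -- the time derivative of Φ
  have hΦfun : (fun τ => Φ θ τ) = fun τ => (k θ τ)⁻¹ - L τ / (2*Real.pi)
      - (1/(2*Real.pi)) * ∫ σ in (0:ℝ)..τ, ∫ x in (0:ℝ)..(2*Real.pi), k x σ ^ α :=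
    funext (hΦ θ)
  have hΦtHas : HasDerivAt (fun τ => Φ θ τ)
      (-(kt (θ, t)) / (k θ t) ^ 2 - 0 / (2*Real.pi)
        - (1/(2*Real.pi)) * ∫ x in (0:ℝ)..(2*Real.pi), k x t ^ α) t := by
    rw [hΦfun]
    exact ((hinvHas θ t).sub (hLderiv.div_const _)).sub (hIderiv.const_mul _)
  -- value of the time derivative
  have hA' : deriv (fun τ => Φ θ τ) t =
      -(deriv (deriv (fun y => k y t ^ α)) θ + k θ t ^ α) := by
    rw [hΦtHas.deriv, hF't_eq θ, ← hlam t]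
    ring
  -- spatial derivatives of Φ
  have hΦxfun : (fun x => Φ x t) = fun x => (k x t)⁻¹ + (-(L t / (2*Real.pi))
      - (1/(2*Real.pi)) * ∫ σ in (0:ℝ)..t, ∫ x in (0:ℝ)..(2*Real.pi), k x σ ^ α) := by
    funext x; rw [hΦ x t]; ring
  have hfd : ∀ x : ℝ, HasDerivAt (fun y => k y t) (deriv (fun y => k y t) x) x :=
    fun x => (((hsecθ t).differentiable (by simp)) x).hasDerivAt
  have hΦ1 : ∀ x : ℝ, deriv (fun y => Φ y t) x
      = -(deriv (fun y => k y t) x) / (k x t) ^ 2 := by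
    intro x
    rw [hΦxfun]
    exact (((hfd x).inv (hkne x t)).add_const _).deriv
  have hf1 : ContDiff ℝ ∞ (deriv (fun y => k y t)) :=
    (contDiff_infty_iff_deriv.mp ((hsecθ t).of_le (by simp))).2
  have hf1d : HasDerivAt (deriv (fun y => k y t))
      (deriv (deriv (fun y => k y t)) θ) θ :=
    ((contDiff_infty_iff_deriv.mp hf1).1 θ).hasDerivAt
  -- abbreviations
  set K := k θ t with hK
  set k1 := deriv (fun y => k y t) θ with hk1
  set k2 := deriv (deriv (fun y => k y t)) θ with hk2
  have hKpos : 0 < K := hkpos θ t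
  have hKne : K ≠ 0 := hKpos.ne'
  -- second spatial derivative of Φ
  have hΦ2has : HasDerivAt (fun x => -(deriv (fun y => k y t) x) / (k x t) ^ 2)
      ((-k2 * K ^ 2 - -k1 * (2 * K * k1)) / (K ^ 2) ^ 2) θ := by
    have h1 : HasDerivAt (fun x => -(deriv (fun y => k y t) x)) (-k2) θ := hf1d.neg
    have h2 : HasDerivAt (fun x => (k x t) ^ 2) (2 * K * k1) θ := by
      have := (hfd θ).fun_pow 2
      simpa [mul_comm, mul_assoc, mul_left_comm] using this
    exact h1.div h2 (pow_ne_zero 2 hKne)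
  have hΦ2 : deriv (deriv (fun y => Φ y t)) θ
      = (-k2 * K ^ 2 - -k1 * (2 * K * k1)) / (K ^ 2) ^ 2 := by
    have : deriv (fun y => Φ y t) = fun x => -(deriv (fun y => k y t) x) / (k x t) ^ 2 :=
      funext hΦ1
    rw [this]
    exact hΦ2has.deriv
  -- second spatial derivative of k^α
  have hkα1 : deriv (fun y => k y t ^ α)
      = fun x => deriv (fun y => k y t) x * α * (k x t) ^ (α - 1) := by
    funext x
    exact ((hfd x).rpow_const (Or.inl (hkne x t))).deriv
  have hkα2has : HasDerivAt (fun x => deriv (fun y => k y t) x * α * (k x t) ^ (α - 1))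
      (k2 * α * K ^ (α - 1) + k1 * α * (k1 * (α - 1) * K ^ (α - 1 - 1))) θ := by
    have h1 : HasDerivAt (fun x => deriv (fun y => k y t) x * α) (k2 * α) θ :=
      hf1d.mul_const α
    have h2 : HasDerivAt (fun x => (k x t) ^ (α - 1))
        (k1 * (α - 1) * K ^ (α - 1 - 1)) θ :=
      (hfd θ).rpow_const (Or.inl hKne)
    exact h1.mul h2
  have hAval : deriv (deriv (fun y => k y t ^ α)) θ
      = k2 * α * K ^ (α - 1) + k1 * α * (k1 * (α - 1) * K ^ (α - 1 - 1)) := by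
    rw [hkα1]
    exact hkα2has.deriv
  -- rpow arithmetic
  have e0 : K ^ (α - 1) = K ^ (α - 2) * K := by
    have h := (Real.rpow_add hKpos (α - 2) 1).symm
    rw [Real.rpow_one] at h
    rw [h]; congr 1; ring
  have e1 : K ^ α = K ^ (α - 2) * K ^ (2:ℕ) := by
    have h := (Real.rpow_add hKpos (α - 2) (((2:ℕ)):ℝ)).symm
    rw [Real.rpow_natCast] at h
    rw [h]; congr 1; push_cast; ring
  have e2 : K ^ (α + 1) = K ^ (α - 2) * K ^ (3:ℕ) := by
    have h := (Real.rpow_add hKpos (α - 2) (((3:ℕ)):ℝ)).symm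
    rw [Real.rpow_natCast] at h
    rw [h]; congr 1; push_cast; ring
  have e3 : K ^ (α + 2) = K ^ (α - 2) * K ^ (4:ℕ) := by
    have h := (Real.rpow_add hKpos (α - 2) (((4:ℕ)):ℝ)).symm
    rw [Real.rpow_natCast] at h
    rw [h]; congr 1; push_cast; ring
  have e4 : α - 1 - 1 = α - 2 := by ring
  -- the main identity
  have hmain : deriv (fun τ => Φ θ τ) t =
      α * K ^ (α + 1) * deriv (deriv (fun x => Φ x t)) θ -
        α * (α + 1) * K ^ (α + 2) * (deriv (fun x => Φ x t) θ) ^ 2 - K ^ α := by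
    rw [hA', hAval, hΦ2, hΦ1 θ, e4, e0, e1, e2, e3]
    rw [← hK, ← hk1]
    have hK2 : K ^ (2:ℕ) ≠ 0 := pow_ne_zero _ hKne
    field_simp
    ring
  refine ⟨hmain, ?_⟩
  rw [hmain]
  have hα2 : 0 ≤ α * (α + 1) * K ^ (α + 2) * (deriv (fun x => Φ x t) θ) ^ 2 := by
    have h1 : (0:ℝ) < K ^ (α + 2) := Real.rpow_pos_of_pos hKpos _
    positivity
  have hka : 0 < K ^ α := Real.rpow_pos_of_pos hKpos _
  linarith
end

section
/- Let v : S¹ × [0,T) → (0,∞) be a smooth solution of v_t = α v^p (v_{θθ} + v − λ(t)) with p = 1 + 1/α > 1, α > 0, and λ(t) ≥ 0 continuous. Set Ψ = v² + v_θ². Then for every t ∈ [0,T): max_{S¹×[0,t]} Ψ ≤ max{ max_{S¹×[0,t]} v², max_{S¹×{0}} Ψ }. -/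
open MeasureTheory Real Filter Set Topology
open scoped ContDiff

private lemma aux_le_of_eps {a b : ℝ} (h : ∀ ε : ℝ, 0 < ε → a ≤ b + ε) : a ≤ b := by
  by_contra hc
  push_neg at hc
  have := h ((a - b)/2) (by linarith)
  linarith

private lemma aux_time {f : ℝ → ℝ} {a d : ℝ} (ha : 0 < a) (hd : HasDerivAt f d a)
    (hmax : ∀ x ∈ Set.Icc (0:ℝ) a, f x ≤ f a) : 0 ≤ d := by
  have hslope := hasDerivAt_iff_tendsto_slope.1 hd
  have hne : (𝓝[Set.Ioo (0:ℝ) a] a).NeBot := right_nhdsWithin_Ioo_neBot ha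
  have hmono : 𝓝[Set.Ioo (0:ℝ) a] a ≤ 𝓝[≠] a :=
    nhdsWithin_mono _ (fun x hx => ne_of_lt hx.2)
  refine ge_of_tendsto (hslope.mono_left hmono) ?_
  filter_upwards [self_mem_nhdsWithin] with x hx
  have h1 : f x ≤ f a := hmax x ⟨hx.1.le, hx.2.le⟩
  have h2 : x - a < 0 := by linarith [hx.2]
  rw [slope_def_field]
  exact div_nonneg_of_nonpos (by linarith) (by linarith)

private lemma aux_snd {g : ℝ → ℝ} {x b : ℝ} (hg : Differentiable ℝ g)
    (hb : HasDerivAt (deriv g) b x) (hmax : ∀ y, g y ≤ g x) : b ≤ 0 := by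
  by_contra hc
  push_neg at hc
  have hloc : IsLocalMax g x := Filter.Eventually.of_forall hmax
  have h0 : deriv g x = 0 := hloc.deriv_eq_zero
  have hslope := hasDerivAt_iff_tendsto_slope.1 hb
  have hmono : 𝓝[>] x ≤ 𝓝[≠] x := nhdsWithin_mono _ (fun y hy => ne_of_gt hy)
  have hev : ∀ᶠ y in 𝓝[>] x, 0 < slope (deriv g) x y :=
    (hslope.mono_left hmono).eventually (eventually_gt_nhds hc)
  have hev2 : ∀ᶠ y in 𝓝[>] x, 0 < deriv g y := by
    filter_upwards [hev, self_mem_nhdsWithin] with y hy hy2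
    rw [slope_def_field] at hy
    have : 0 < (deriv g y - deriv g x) / (y - x) := hy
    rw [h0, sub_zero] at this
    have hyx : 0 < y - x := by simpa using sub_pos.mpr (show x < y from hy2)
    have := mul_pos this hyx
    rwa [div_mul_cancel₀] at this
    exact hyx.ne'
  obtain ⟨u, hu, hsub⟩ := mem_nhdsGT_iff_exists_Ioo_subset.1 hev2
  have hxu : x < u := hu
  set m := (x + u) / 2 with hm
  have hxm : x < m := by simp only [hm]; linarith
  have hmu : m < u := by simp only [hm]; linarith
  have hsm : StrictMonoOn g (Set.Icc x m) := by
    refine strictMonoOn_of_deriv_pos (convex_Icc x m) hg.continuous.continuousOn ?_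
    intro y hy
    rw [interior_Icc] at hy
    exact hsub ⟨hy.1, hy.2.trans hmu⟩
  have := hsm (Set.left_mem_Icc.2 hxm.le) (Set.right_mem_Icc.2 hxm.le) hxm
  exact absurd (hmax m) (by linarith)

section partials

variable {v : ℝ → ℝ → ℝ}

private lemma pdA (hsmooth : ContDiff ℝ (⊤ : ℕ∞) (fun p : ℝ × ℝ => v p.1 p.2)) (x τ : ℝ) : HasDerivAt (fun y => v y τ)
    (fderiv ℝ (fun p : ℝ × ℝ => v p.1 p.2) (x, τ) (1, 0)) x := by
  have h1 : HasDerivAt (fun y : ℝ => (y, τ)) ((1:ℝ), (0:ℝ)) x :=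
    (hasDerivAt_id x).prodMk (hasDerivAt_const x τ)
  exact ((hsmooth.differentiable (by simp) (x, τ)).hasFDerivAt).comp_hasDerivAt x h1

private lemma pdB (hsmooth : ContDiff ℝ (⊤ : ℕ∞) (fun p : ℝ × ℝ => v p.1 p.2)) (x τ : ℝ) : HasDerivAt (fun σ => v x σ)
    (fderiv ℝ (fun p : ℝ × ℝ => v p.1 p.2) (x, τ) (0, 1)) τ := by
  have h1 : HasDerivAt (fun σ : ℝ => (x, σ)) ((0:ℝ), (1:ℝ)) τ :=
    (hasDerivAt_const τ x).prodMk (hasDerivAt_id τ)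
  exact ((hsmooth.differentiable (by simp) (x, τ)).hasFDerivAt).comp_hasDerivAt τ h1

private lemma pdF1 (hsmooth : ContDiff ℝ (⊤ : ℕ∞) (fun p : ℝ × ℝ => v p.1 p.2)) : ContDiff ℝ ∞ (fderiv ℝ (fun p : ℝ × ℝ => v p.1 p.2)) :=
  hsmooth.fderiv_right (m := ∞) (by simp)

private lemma pdC (hsmooth : ContDiff ℝ (⊤ : ℕ∞) (fun p : ℝ × ℝ => v p.1 p.2)) (x τ : ℝ) :
    HasDerivAt (fun σ => fderiv ℝ (fun p : ℝ × ℝ => v p.1 p.2) (x, σ) (1, 0))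
    (fderiv ℝ (fderiv ℝ (fun p : ℝ × ℝ => v p.1 p.2)) (x, τ) (0, 1) (1, 0)) τ := by
  have h1 : HasDerivAt (fun σ : ℝ => (x, σ)) ((0:ℝ), (1:ℝ)) τ :=
    (hasDerivAt_const τ x).prodMk (hasDerivAt_id τ)
  have h2 : HasDerivAt (fun σ : ℝ => fderiv ℝ (fun p : ℝ × ℝ => v p.1 p.2) (x, σ))
      (fderiv ℝ (fderiv ℝ (fun p : ℝ × ℝ => v p.1 p.2)) (x, τ) (0, 1)) τ :=
    (((pdF1 hsmooth).differentiable (by norm_num) (x, τ)).hasFDerivAt).comp_hasDerivAt τ h1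
  have h3 := ((ContinuousLinearMap.apply ℝ ℝ ((1:ℝ),(0:ℝ))).hasFDerivAt).comp_hasDerivAt τ h2
  exact h3

private lemma pdD (hsmooth : ContDiff ℝ (⊤ : ℕ∞) (fun p : ℝ × ℝ => v p.1 p.2)) (x τ : ℝ) :
    HasDerivAt (fun y => fderiv ℝ (fun p : ℝ × ℝ => v p.1 p.2) (y, τ) (0, 1))
    (fderiv ℝ (fderiv ℝ (fun p : ℝ × ℝ => v p.1 p.2)) (x, τ) (1, 0) (0, 1)) x := by
  have h1 : HasDerivAt (fun y : ℝ => (y, τ)) ((1:ℝ), (0:ℝ)) x :=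
    (hasDerivAt_id x).prodMk (hasDerivAt_const x τ)
  have h2 : HasDerivAt (fun y : ℝ => fderiv ℝ (fun p : ℝ × ℝ => v p.1 p.2) (y, τ))
      (fderiv ℝ (fderiv ℝ (fun p : ℝ × ℝ => v p.1 p.2)) (x, τ) (1, 0)) x :=
    (((pdF1 hsmooth).differentiable (by norm_num) (x, τ)).hasFDerivAt).comp_hasDerivAt x h1
  have h3 := ((ContinuousLinearMap.apply ℝ ℝ ((0:ℝ),(1:ℝ))).hasFDerivAt).comp_hasDerivAt x h2
  exact h3

private lemma pdSymm (hsmooth : ContDiff ℝ (⊤ : ℕ∞) (fun p : ℝ × ℝ => v p.1 p.2)) (p a b : ℝ × ℝ) :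
    fderiv ℝ (fderiv ℝ (fun p : ℝ × ℝ => v p.1 p.2)) p a b =
    fderiv ℝ (fderiv ℝ (fun p : ℝ × ℝ => v p.1 p.2)) p b a :=
  second_derivative_symmetric
    (fun y => (hsmooth.differentiable (by simp) y).hasFDerivAt)
    (((pdF1 hsmooth).differentiable (by norm_num) p).hasFDerivAt) a b

end partials

/-- Gradient estimate for `v = k^α` solving `v_t = α v^p (v_{θθ} + v − λ(t))` with
`p = 1 + 1/α` and `λ(t) ≥ 0`: with `Ψ = v² + v_θ²`, for every `t ∈ [0,T)`,
`max_{S¹×[0,t]} Ψ ≤ max { max_{S¹×[0,t]} v², max_{S¹×{0}} Ψ }`. -/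
theorem stmt_17 (α T : ℝ) (hα : 0 < α) (hT : 0 < T)
    (v : ℝ → ℝ → ℝ)
    (hsmooth : ContDiff ℝ (⊤ : ℕ∞) (fun p : ℝ × ℝ => v p.1 p.2))
    (hper : ∀ t, Function.Periodic (fun θ => v θ t) (2 * Real.pi))
    (hvpos : ∀ θ t, 0 < v θ t)
    (lam : ℝ → ℝ) (hlamc : Continuous lam) (hlamnn : ∀ t, 0 ≤ lam t)
    (hpde : ∀ θ : ℝ, ∀ t ∈ Set.Ico (0:ℝ) T,
      deriv (fun τ => v θ τ) t =
        α * v θ t ^ (1 + 1/α) *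
          (deriv (deriv (fun x => v x t)) θ + v θ t - lam t))
    (Ψ : ℝ → ℝ → ℝ)
    (hΨ : ∀ θ t, Ψ θ t = (v θ t) ^ 2 + (deriv (fun x => v x t) θ) ^ 2) :
    ∀ t ∈ Set.Ico (0:ℝ) T, ∀ θ : ℝ, ∀ s ∈ Set.Icc (0:ℝ) t,
      Ψ θ s ≤ max
        (sSup {x : ℝ | ∃ θ' ∈ Set.Icc (0:ℝ) (2 * Real.pi), ∃ s' ∈ Set.Icc (0:ℝ) t,
          x = (v θ' s') ^ 2})
        (sSup {x : ℝ | ∃ θ' ∈ Set.Icc (0:ℝ) (2 * Real.pi), x = Ψ θ' 0}) := by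
  intro t ht θ₀ s₀ hs₀
  have h2π : 0 < 2 * Real.pi := by positivity
  have ht0 : 0 ≤ t := ht.1
  set SA := {x : ℝ | ∃ θ' ∈ Set.Icc (0:ℝ) (2 * Real.pi), ∃ s' ∈ Set.Icc (0:ℝ) t,
      x = (v θ' s') ^ 2} with hSA_def
  set SB := {x : ℝ | ∃ θ' ∈ Set.Icc (0:ℝ) (2 * Real.pi), x = Ψ θ' 0} with hSB_def
  set M := max (sSup SA) (sSup SB) with hM_def
  -- continuity facts
  have hcontf : Continuous (fun p : ℝ × ℝ => v p.1 p.2) := hsmooth.continuous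
  have hF1c : Continuous (fderiv ℝ (fun p : ℝ × ℝ => v p.1 p.2)) :=
    (pdF1 hsmooth).continuous
  have hΨ' : ∀ x τ, Ψ x τ = v x τ ^ 2 +
      (fderiv ℝ (fun p : ℝ × ℝ => v p.1 p.2) (x, τ) (1, 0)) ^ 2 := by
    intro x τ
    rw [hΨ x τ, (pdA hsmooth x τ).deriv]
  have hΨc : Continuous (fun p : ℝ × ℝ => Ψ p.1 p.2) := by
    have heq : (fun p : ℝ × ℝ => Ψ p.1 p.2) = (fun p : ℝ × ℝ => v p.1 p.2 ^ 2 +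
        (fderiv ℝ (fun p : ℝ × ℝ => v p.1 p.2) p (1, 0)) ^ 2) := by
      funext p
      rw [hΨ' p.1 p.2]
    rw [heq]
    have h1 : Continuous (fun p : ℝ × ℝ =>
        fderiv ℝ (fun p : ℝ × ℝ => v p.1 p.2) p ((1:ℝ), (0:ℝ))) :=
      (ContinuousLinearMap.apply ℝ ℝ ((1:ℝ), (0:ℝ))).continuous.comp hF1c
    exact (hcontf.pow 2).add (h1.pow 2)
  -- periodicity of Ψ in θ
  have hperΨ : ∀ τ, Function.Periodic (fun x => Ψ x τ) (2 * Real.pi) := by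
    intro τ x
    have h1 : (fun y => v y τ) = fun y => v (y + 2 * Real.pi) τ :=
      funext fun y => ((hper τ) y).symm
    have h2 : deriv (fun y => v y τ) (x + 2 * Real.pi) = deriv (fun y => v y τ) x := by
      calc deriv (fun y => v y τ) (x + 2 * Real.pi)
          = deriv (fun y => v (y + 2 * Real.pi) τ) x :=
            (deriv_comp_add_const (f := fun y => v y τ) (a := 2 * Real.pi) (x := x)).symm
        _ = deriv (fun y => v y τ) x := by rw [← h1]
    have h3 : v (x + 2 * Real.pi) τ = v x τ := (hper τ) x
    simp only [hΨ, h2, h3]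
  -- boundedness
  have hbddA : BddAbove SA := by
    have heq : SA = (fun p : ℝ × ℝ => v p.1 p.2 ^ 2) ''
        (Set.Icc (0:ℝ) (2 * Real.pi) ×ˢ Set.Icc (0:ℝ) t) := by
      ext x
      constructor
      · rintro ⟨θ', hθ', s', hs', rfl⟩
        exact ⟨(θ', s'), ⟨hθ', hs'⟩, rfl⟩
      · rintro ⟨⟨a, b⟩, ⟨ha, hb⟩, rfl⟩
        exact ⟨a, ha, b, hb, rfl⟩
    rw [heq]
    exact ((isCompact_Icc.prod isCompact_Icc).image (hcontf.pow 2)).bddAbove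
  have hbddB : BddAbove SB := by
    have heq : SB = (fun x => Ψ x 0) '' (Set.Icc (0:ℝ) (2 * Real.pi)) := by
      ext x
      constructor
      · rintro ⟨θ', hθ', rfl⟩
        exact ⟨θ', hθ', rfl⟩
      · rintro ⟨a, ha, rfl⟩
        exact ⟨a, ha, rfl⟩
    rw [heq]
    have hc0 : Continuous (fun x : ℝ => Ψ x 0) :=
      hΨc.comp (continuous_id.prodMk continuous_const)
    exact (isCompact_Icc.image hc0).bddAbove
  -- the key maximum-principle claim
  have key : ∀ δ : ℝ, 0 < δ → ∀ x : ℝ, ∀ σ ∈ Set.Icc (0:ℝ) t, Ψ x σ - δ * σ ≤ M := by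
    intro δ hδ x σ hσ
    set K := Set.Icc (0:ℝ) (2 * Real.pi) ×ˢ Set.Icc (0:ℝ) t with hK_def
    have hKc : IsCompact K := isCompact_Icc.prod isCompact_Icc
    have hKne : K.Nonempty := ⟨(0, 0), ⟨⟨le_refl 0, h2π.le⟩, ⟨le_refl 0, ht0⟩⟩⟩
    have hGc : Continuous (fun p : ℝ × ℝ => Ψ p.1 p.2 - δ * p.2) :=
      hΨc.sub (continuous_const.mul continuous_snd)
    obtain ⟨⟨θ1, s1⟩, hp1K, hp1max⟩ := hKc.exists_isMaxOn hKne hGc.continuousOn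
    have hθ1 : θ1 ∈ Set.Icc (0:ℝ) (2 * Real.pi) := hp1K.1
    have hs1 : s1 ∈ Set.Icc (0:ℝ) t := hp1K.2
    -- reduce the goal to the max point
    obtain ⟨y, hy, hxy⟩ := (hperΨ σ).exists_mem_Ico₀ h2π x
    have hxy' : Ψ x σ = Ψ y σ := hxy
    have hyK : ((y, σ) : ℝ × ℝ) ∈ K := ⟨⟨hy.1, hy.2.le⟩, hσ⟩
    have hle : Ψ x σ - δ * σ ≤ Ψ θ1 s1 - δ * s1 := by
      have h' : Ψ y σ - δ * σ ≤ Ψ θ1 s1 - δ * s1 := hp1max hyK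
      linarith [hxy'.le, hxy'.ge]
    by_contra hcon
    push_neg at hcon
    have hMlt : M < Ψ θ1 s1 - δ * s1 := lt_of_lt_of_le hcon hle
    -- positivity of s1
    have hs1pos : 0 < s1 := by
      rcases hs1.1.lt_or_eq with h | h
      · exact h
      · exfalso
        have hmem : Ψ θ1 0 ∈ SB := ⟨θ1, hθ1, rfl⟩
        have h1 : Ψ θ1 0 ≤ sSup SB := le_csSup hbddB hmem
        have h2 : sSup SB ≤ M := le_max_right _ _
        rw [← h] at hMlt
        simp only [mul_zero, sub_zero] at hMlt
        linarith
    have hs1T : s1 ∈ Set.Ico (0:ℝ) T := ⟨hs1.1, lt_of_le_of_lt hs1.2 ht.2⟩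
    -- spatial maximality over all of ℝ
    have hmaxθ : ∀ z : ℝ, Ψ z s1 ≤ Ψ θ1 s1 := by
      intro z
      obtain ⟨w, hw, hzw⟩ := (hperΨ s1).exists_mem_Ico₀ h2π z
      have hzw' : Ψ z s1 = Ψ w s1 := hzw
      have hwK : ((w, s1) : ℝ × ℝ) ∈ K := ⟨⟨hw.1, hw.2.le⟩, hs1⟩
      have h' : Ψ w s1 - δ * s1 ≤ Ψ θ1 s1 - δ * s1 := hp1max hwK
      linarith
    -- one-variable smoothness of the slice
    have hu : ContDiff ℝ ∞ (fun y' => v y' s1) :=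
      (hsmooth.of_le (by simp)).comp (contDiff_id.prodMk contDiff_const)
    have hu1 : Differentiable ℝ (fun y' => v y' s1) := hu.differentiable (by norm_num)
    have hud : ContDiff ℝ ∞ (deriv (fun y' => v y' s1)) := by
      have h := hu.iterate_deriv 1
      simpa using h
    have hu2 : Differentiable ℝ (deriv (fun y' => v y' s1)) := hud.differentiable (by norm_num)
    have hudd : ContDiff ℝ ∞ (deriv (deriv (fun y' => v y' s1))) := by
      have h := hud.iterate_deriv 1
      simpa using h
    have hu3 : Differentiable ℝ (deriv (deriv (fun y' => v y' s1))) :=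
      hudd.differentiable (by norm_num)
    -- v_θ ≠ 0 at the max point
    have hvsq : v θ1 s1 ^ 2 ≤ sSup SA := le_csSup hbddA ⟨θ1, hθ1, s1, hs1, rfl⟩
    have hΨgt : v θ1 s1 ^ 2 < Ψ θ1 s1 := by
      have h1 : sSup SA ≤ M := le_max_left _ _
      have h2 : 0 < δ * s1 := mul_pos hδ hs1pos
      linarith
    have hne : deriv (fun x' => v x' s1) θ1 ≠ 0 := by
      intro h
      rw [hΨ θ1 s1, h] at hΨgt
      simp at hΨgt
    -- the spatial derivative of Ψ(·,s1)
    have hgfun : (fun z => Ψ z s1) =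
        (fun z => v z s1 ^ 2 + deriv (fun x' => v x' s1) z ^ 2) :=
      funext fun z => hΨ z s1
    have hderivg : deriv (fun z => Ψ z s1) = fun z =>
        2 * v z s1 * deriv (fun x' => v x' s1) z +
        2 * deriv (fun x' => v x' s1) z * deriv (deriv (fun x' => v x' s1)) z := by
      funext z
      have h1 : HasDerivAt (fun y' => v y' s1 ^ 2 + deriv (fun x' => v x' s1) y' ^ 2)
          ((2:ℕ) * v z s1 ^ (2-1) * deriv (fun x' => v x' s1) z +
           (2:ℕ) * deriv (fun x' => v x' s1) z ^ (2-1) *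
             deriv (deriv (fun x' => v x' s1)) z) z :=
        ((hu1 z).hasDerivAt.pow 2).add (((hu2 z).hasDerivAt).pow 2)
      rw [hgfun, h1.deriv]
      push_cast
      ring
    have hgd0 : deriv (fun z => Ψ z s1) θ1 = 0 := by
      have hloc : IsLocalMax (fun z => Ψ z s1) θ1 := Filter.Eventually.of_forall hmaxθ
      exact hloc.deriv_eq_zero
    have key1 : deriv (deriv (fun x' => v x' s1)) θ1 = - v θ1 s1 := by
      have h1 := hgd0
      rw [hderivg] at h1
      have h2 : deriv (fun x' => v x' s1) θ1 *
          (v θ1 s1 + deriv (deriv (fun x' => v x' s1)) θ1) = 0 := by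
        linear_combination h1 / 2
      rcases mul_eq_zero.1 h2 with h | h
      · exact absurd h hne
      · linarith
    -- second derivative test
    have hgdiff : Differentiable ℝ (fun z => Ψ z s1) := by
      rw [hgfun]
      exact (hu1.pow 2).add (hu2.pow 2)
    have hD2 : HasDerivAt (deriv (fun z => Ψ z s1))
        ((2 * deriv (fun x' => v x' s1) θ1) * deriv (fun x' => v x' s1) θ1 +
          (2 * v θ1 s1) * deriv (deriv (fun x' => v x' s1)) θ1 +
         ((2 * deriv (deriv (fun x' => v x' s1)) θ1) * deriv (deriv (fun x' => v x' s1)) θ1 +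
          (2 * deriv (fun x' => v x' s1) θ1) * deriv (deriv (deriv (fun x' => v x' s1))) θ1)) θ1 := by
      rw [hderivg]
      have ha : HasDerivAt (fun z => v z s1) (deriv (fun x' => v x' s1) θ1) θ1 :=
        (hu1 θ1).hasDerivAt
      have hb : HasDerivAt (deriv (fun x' => v x' s1))
          (deriv (deriv (fun x' => v x' s1)) θ1) θ1 := (hu2 θ1).hasDerivAt
      have hc : HasDerivAt (deriv (deriv (fun x' => v x' s1)))
          (deriv (deriv (deriv (fun x' => v x' s1)))  θ1) θ1 := (hu3 θ1).hasDerivAt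
      exact ((ha.const_mul 2).mul hb).add ((hb.const_mul 2).mul hc)
    have hD2le := aux_snd hgdiff hD2 hmaxθ
    have key2 : deriv (fun x' => v x' s1) θ1 *
        (deriv (fun x' => v x' s1) θ1 + deriv (deriv (deriv (fun x' => v x' s1))) θ1) ≤ 0 := by
      rw [key1] at hD2le
      nlinarith [hD2le]
    -- time direction
    have hmaxt : ∀ σ' ∈ Set.Icc (0:ℝ) s1,
        Ψ θ1 σ' - δ * σ' ≤ Ψ θ1 s1 - δ * s1 := by
      intro σ' hσ'
      have hmem : ((θ1, σ') : ℝ × ℝ) ∈ K := ⟨hθ1, ⟨hσ'.1, hσ'.2.trans hs1.2⟩⟩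
      exact hp1max hmem
    have hΨtime : HasDerivAt (fun σ' => Ψ θ1 σ' - δ * σ')
        (((2:ℕ) * v θ1 s1 ^ (2-1) *
          (fderiv ℝ (fun p : ℝ × ℝ => v p.1 p.2) (θ1, s1) (0, 1)) +
         (2:ℕ) * (fderiv ℝ (fun p : ℝ × ℝ => v p.1 p.2) (θ1, s1) (1, 0)) ^ (2-1) *
          (fderiv ℝ (fderiv ℝ (fun p : ℝ × ℝ => v p.1 p.2)) (θ1, s1) (0, 1) (1, 0))) -
          δ * 1) s1 := by
      have heq2 : (fun σ' => Ψ θ1 σ' - δ * σ') = (fun σ' => (v θ1 σ' ^ 2 +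
          (fderiv ℝ (fun p : ℝ × ℝ => v p.1 p.2) (θ1, σ') (1, 0)) ^ 2) - δ * σ') := by
        funext σ'
        rw [hΨ' θ1 σ']
      rw [heq2]
      exact (((pdB hsmooth θ1 s1).pow 2).add ((pdC hsmooth θ1 s1).pow 2)).sub
        ((hasDerivAt_id s1).const_mul δ)
    have htime := aux_time hs1pos hΨtime hmaxt
    -- identify the time derivative via the PDE
    have hA1 : deriv (fun x' => v x' s1) θ1 =
        fderiv ℝ (fun p : ℝ × ℝ => v p.1 p.2) (θ1, s1) (1, 0) := (pdA hsmooth θ1 s1).deriv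
    have hVT : fderiv ℝ (fun p : ℝ × ℝ => v p.1 p.2) (θ1, s1) (0, 1) =
        α * v θ1 s1 ^ (1 + 1/α) *
          (deriv (deriv (fun x => v x s1)) θ1 + v θ1 s1 - lam s1) := by
      rw [← (pdB hsmooth θ1 s1).deriv]
      exact hpde θ1 s1 hs1T
    have hfunQ : (fun y' => fderiv ℝ (fun p : ℝ × ℝ => v p.1 p.2) (y', s1) ((0:ℝ), (1:ℝ))) =
        (fun y' => α * v y' s1 ^ (1 + 1/α) *
          (deriv (deriv (fun x => v x s1)) y' + v y' s1 - lam s1)) := by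
      funext y'
      rw [← (pdB hsmooth y' s1).deriv]
      exact hpde y' s1 hs1T
    have hrpow : HasDerivAt (fun y' => v y' s1 ^ (1 + 1/α))
        (deriv (fun x' => v x' s1) θ1 * (1 + 1/α) * v θ1 s1 ^ (1 + 1/α - 1)) θ1 :=
      (hu1 θ1).hasDerivAt.rpow_const (Or.inl (hvpos θ1 s1).ne')
    have hin : HasDerivAt
        (fun y' => deriv (deriv (fun x => v x s1)) y' + v y' s1 - lam s1)
        (deriv (deriv (deriv (fun x' => v x' s1))) θ1 + deriv (fun x' => v x' s1) θ1) θ1 :=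
      ((hu3 θ1).hasDerivAt.add (hu1 θ1).hasDerivAt).sub_const _
    have hprod := (hrpow.const_mul α).mul hin
    have hQ : fderiv ℝ (fderiv ℝ (fun p : ℝ × ℝ => v p.1 p.2)) (θ1, s1) (0, 1) (1, 0) =
        (α * (deriv (fun x' => v x' s1) θ1 * (1 + 1/α) * v θ1 s1 ^ (1 + 1/α - 1))) *
          (deriv (deriv (fun x => v x s1)) θ1 + v θ1 s1 - lam s1) +
        (α * v θ1 s1 ^ (1 + 1/α)) *
          (deriv (deriv (deriv (fun x' => v x' s1))) θ1 + deriv (fun x' => v x' s1) θ1) := by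
      rw [pdSymm hsmooth (θ1, s1) (0, 1) (1, 0)]
      rw [← (pdD hsmooth θ1 s1).deriv]
      rw [hfunQ]
      exact hprod.deriv
    -- final contradiction
    rw [hVT, hQ, ← hA1, key1] at htime
    have ha0 : 0 < v θ1 s1 := hvpos θ1 s1
    have hP : 0 < v θ1 s1 ^ (1 + α⁻¹) := Real.rpow_pos_of_pos ha0 _
    have hR : 0 < v θ1 s1 ^ (α⁻¹) := Real.rpow_pos_of_pos ha0 _
    have h1α : 0 < 1 + 1/α := by positivity
    have hlam0 : 0 ≤ lam s1 := hlamnn s1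
    have c1 : 0 ≤ 2 * α * lam s1 * v θ1 s1 * v θ1 s1 ^ (1 + α⁻¹) := by positivity
    have c2 : 0 ≤ 2 * α * (1 + α⁻¹) * lam s1 * v θ1 s1 ^ (α⁻¹) *
        deriv (fun x' => v x' s1) θ1 ^ 2 := by
      have h2 : 0 < 1 + α⁻¹ := by positivity
      positivity
    have c3 : 2 * α * v θ1 s1 ^ (1 + α⁻¹) *
        (deriv (fun x' => v x' s1) θ1 *
          (deriv (fun x' => v x' s1) θ1 + deriv (deriv (deriv (fun x' => v x' s1))) θ1)) ≤ 0 := by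
      have hpos : (0:ℝ) ≤ 2 * α * v θ1 s1 ^ (1 + α⁻¹) := by positivity
      exact mul_nonpos_of_nonneg_of_nonpos hpos key2
    norm_num at htime
    nlinarith [htime, c1, c2, c3, hδ]
  -- conclude by letting δ → 0
  have hfin : ∀ ε : ℝ, 0 < ε → Ψ θ₀ s₀ ≤ M + ε := by
    intro ε hε
    have hδ : 0 < ε / (t + 1) := div_pos hε (by linarith)
    have hkey := key _ hδ θ₀ s₀ hs₀
    have h1 : ε / (t + 1) * s₀ ≤ ε := by
      rw [div_mul_eq_mul_div, div_le_iff₀ (by linarith)]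
      nlinarith [hs₀.1, hs₀.2]
    linarith
  exact aux_le_of_eps hfin
end

section
/- Let γ(t) be a family of convex closed curves with curvature k(θ,t) > 0 evolving so that ∫₀^{2π}(k^α(θ,t) − λ(t)) dθ = 0 for all t (length-preserving flow), where λ(t) = (1/(2π))∫₀^{2π}k^α dθ, and suppose the Minkowski-type inequality 2π∫₀^{2π}Φ(Φ_{θθ} + Φ) dθ ≤ (∫₀^{2π}Φ dθ)² holds with Φ = k^α − λ(t). Then d/dt [ (1/(α−1)) ∫₀^{2π} k^{α−1}(θ,t) dθ ] ≤ 0; in particular ∫₀^{2π}k^{α−1} dθ is increasing in t for 0 < α < 1 and decreasing for α > 1. -/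
open MeasureTheory Real

/-- Entropy estimate for the length-preserving `k^α`-flow: pairing the Minkowski-type
inequality (with `Φ = k^α − λ(t)`) with the evolution equation gives
`d/dt [(1/(α−1)) ∫₀^{2π} k^(α−1) dθ] ≤ 0`; in particular `∫₀^{2π} k^(α−1) dθ` is
increasing in `t` for `0 < α < 1` and decreasing for `α > 1`. -/
theorem stmt_18 (α : ℝ) (hα : 0 < α) (hα1 : α ≠ 1)
    (k : ℝ → ℝ → ℝ)
    (hsmooth : ContDiff ℝ (⊤ : ℕ∞) (fun p : ℝ × ℝ => k p.1 p.2))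
    (hper : ∀ t, Function.Periodic (fun θ => k θ t) (2 * Real.pi))
    (hkpos : ∀ θ t, 0 < k θ t)
    (lam : ℝ → ℝ)
    (hlam : ∀ t, lam t = (1 / (2 * Real.pi)) * ∫ θ in (0:ℝ)..(2 * Real.pi), k θ t ^ α)
    (hpde : ∀ θ t : ℝ, 0 ≤ t →
      deriv (fun τ => k θ τ) t =
        (k θ t) ^ 2 * (deriv (deriv (fun x => k x t ^ α)) θ + k θ t ^ α - lam t))
    (hLP : ∀ t : ℝ, 0 ≤ t →
      (∫ θ in (0:ℝ)..(2 * Real.pi), (k θ t ^ α - lam t)) = 0)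
    (hMink : ∀ t : ℝ, 0 ≤ t →
      2 * Real.pi * (∫ θ in (0:ℝ)..(2 * Real.pi),
          (k θ t ^ α - lam t) *
            (deriv (deriv (fun x => k x t ^ α - lam t)) θ + (k θ t ^ α - lam t))) ≤
        (∫ θ in (0:ℝ)..(2 * Real.pi), (k θ t ^ α - lam t)) ^ 2) :
    (∀ t : ℝ, 0 ≤ t →
        deriv (fun τ => (1 / (α - 1)) *
          ∫ θ in (0:ℝ)..(2 * Real.pi), k θ τ ^ (α - 1)) t ≤ 0) ∧
      (α < 1 → ∀ s t : ℝ, 0 ≤ s → s ≤ t →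
        (∫ θ in (0:ℝ)..(2 * Real.pi), k θ s ^ (α - 1)) ≤
          ∫ θ in (0:ℝ)..(2 * Real.pi), k θ t ^ (α - 1)) ∧
      (1 < α → ∀ s t : ℝ, 0 ≤ s → s ≤ t →
        (∫ θ in (0:ℝ)..(2 * Real.pi), k θ t ^ (α - 1)) ≤
          ∫ θ in (0:ℝ)..(2 * Real.pi), k θ s ^ (α - 1)) := by
  set f : ℝ × ℝ → ℝ := fun p => k p.1 p.2 with hf
  -- partial derivative in time
  set kt : ℝ → ℝ → ℝ := fun θ t => fderiv ℝ f (θ, t) (0, 1) with hkt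
  have hktcont : Continuous fun p : ℝ × ℝ => kt p.1 p.2 := by
    have h1 : Continuous (fderiv ℝ f) := hsmooth.continuous_fderiv (by simp)
    exact h1.clm_apply continuous_const
  have hkderiv : ∀ θ t, HasDerivAt (fun τ => k θ τ) (kt θ t) t := by
    intro θ t
    have h1 : HasFDerivAt f (fderiv ℝ f (θ, t)) (θ, t) :=
      (hsmooth.differentiable (by simp) (θ, t)).hasFDerivAt
    have h2 : HasDerivAt (fun τ => ((θ, τ) : ℝ × ℝ)) ((0 : ℝ), (1 : ℝ)) t :=
      (hasDerivAt_const t θ).prodMk (hasDerivAt_id t)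
    exact h1.comp_hasDerivAt t h2
  have hsm : ContDiff ℝ ((⊤ : ℕ∞) : WithTop ℕ∞) (fun p : ℝ × ℝ => k p.1 p.2) := hsmooth.of_le (by simp)
  have hslice : ∀ t, ContDiff ℝ ((⊤ : ℕ∞) : WithTop ℕ∞) (fun x => k x t) := fun t =>
    hsm.comp (contDiff_id.prodMk contDiff_const)
  have hg : ∀ (t r : ℝ), ContDiff ℝ ((⊤ : ℕ∞) : WithTop ℕ∞) (fun x => k x t ^ r) := fun t r =>
    (hslice t).rpow_const_of_ne (p := r) (fun x => (hkpos x t).ne')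
  have hg1 : ∀ t, ContDiff ℝ ((⊤ : ℕ∞) : WithTop ℕ∞) (deriv (fun x => k x t ^ α)) := fun t =>
    (contDiff_infty_iff_deriv.mp (hg t α)).2
  have hg2 : ∀ t, Continuous (deriv (deriv (fun x => k x t ^ α))) := fun t =>
    ((contDiff_infty_iff_deriv.mp (hg1 t)).2).continuous
  have hπ : (0:ℝ) < 2 * Real.pi := by positivity
  have hkcont : Continuous fun p : ℝ × ℝ => k p.1 p.2 := hsmooth.continuous
  -- continuity of the rpow of k jointly
  have hkr : ∀ r : ℝ, Continuous fun p : ℝ × ℝ => k p.1 p.2 ^ r := by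
    intro r
    exact hkcont.rpow_const (fun p => Or.inl (hkpos p.1 p.2).ne')
  -- derivative of the entropy integral
  set Fint : ℝ → ℝ := fun τ => ∫ θ in (0:ℝ)..(2 * Real.pi), k θ τ ^ (α - 1) with hFint
  set D : ℝ → ℝ := fun t => ∫ θ in (0:ℝ)..(2 * Real.pi),
      kt θ t * (α - 1) * k θ t ^ (α - 1 - 1) with hDdef
  have hD : ∀ t, HasDerivAt Fint (D t) t := by
    intro t₀
    -- the pointwise derivative
    have hptder : ∀ θ τ, HasDerivAt (fun τ => k θ τ ^ (α - 1))
        (kt θ τ * (α - 1) * k θ τ ^ (α - 1 - 1)) τ := fun θ τ =>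
      (hkderiv θ τ).rpow_const (Or.inl (hkpos θ τ).ne')
    -- bound on a compact set
    obtain ⟨C, hC⟩ : ∃ C, ∀ p ∈ (Set.Icc (0:ℝ) (2 * Real.pi)) ×ˢ (Set.Icc (t₀ - 1) (t₀ + 1)),
        ‖kt p.1 p.2 * (α - 1) * k p.1 p.2 ^ (α - 1 - 1)‖ ≤ C := by
      apply IsCompact.exists_bound_of_continuousOn (isCompact_Icc.prod isCompact_Icc)
      exact ((hktcont.mul continuous_const).mul (hkr _)).continuousOn
    have key := intervalIntegral.hasDerivAt_integral_of_dominated_loc_of_deriv_le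
      (F := fun τ θ => k θ τ ^ (α - 1))
      (F' := fun τ θ => kt θ τ * (α - 1) * k θ τ ^ (α - 1 - 1))
      (x₀ := t₀) (a := 0) (b := 2 * Real.pi) (μ := volume) (bound := fun _ => C)
      (s := Metric.ball t₀ 1) (Metric.ball_mem_nhds t₀ one_pos)
      (Filter.Eventually.of_forall fun τ =>
        ((hkr (α - 1)).comp (continuous_id.prodMk continuous_const)).aestronglyMeasurable)
      (((hkr (α - 1)).comp (continuous_id.prodMk continuous_const)).intervalIntegrable _ _)
      ((((hktcont.mul continuous_const).mul (hkr _)).comp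
        (continuous_id.prodMk continuous_const)).aestronglyMeasurable)
      (Filter.Eventually.of_forall fun θ hθ τ hτ => by
        apply hC (θ, τ)
        constructor
        · have : Set.uIoc (0:ℝ) (2 * Real.pi) = Set.Ioc 0 (2 * Real.pi) :=
            Set.uIoc_of_le (by positivity)
          rw [this] at hθ
          exact ⟨hθ.1.le, hθ.2⟩
        · rw [Metric.mem_ball, Real.dist_eq, abs_lt] at hτ
          exact ⟨by linarith [hτ.1], by linarith [hτ.2]⟩)
      (intervalIntegrable_const)
      (Filter.Eventually.of_forall fun θ _ τ _ => hptder θ τ)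
    exact key.2
  -- the key sign computation for t ≥ 0
  have hkey : ∀ t : ℝ, 0 ≤ t → (1 / (α - 1)) * D t ≤ 0 := by
    intro t ht
    set g : ℝ → ℝ := fun x => k x t ^ α with hgdef
    set Φ : ℝ → ℝ := fun θ => k θ t ^ α - lam t with hΦ
    set Ψ : ℝ → ℝ := fun θ => deriv (deriv g) θ + Φ θ with hΨ
    have hΦcont : Continuous Φ := ((hkr α).comp (continuous_id.prodMk continuous_const)).sub
      continuous_const
    have hΨcont : Continuous Ψ := (hg2 t).add hΦcont
    -- rewrite D t
    have hDt : D t = (α - 1) * ∫ θ in (0:ℝ)..(2 * Real.pi), k θ t ^ α * Ψ θ := by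
      rw [hDdef]
      rw [← intervalIntegral.integral_const_mul]
      apply intervalIntegral.integral_congr
      intro θ _
      show kt θ t * (α - 1) * k θ t ^ (α - 1 - 1) = (α - 1) * (k θ t ^ α * Ψ θ)
      have h1 : kt θ t = deriv (fun τ => k θ τ) t := ((hkderiv θ t).deriv).symm
      rw [h1, hpde θ t ht]
      have h2 : k θ t ^ (2:ℕ) * k θ t ^ (α - 1 - 1) = k θ t ^ α := by
        rw [← Real.rpow_natCast (k θ t) 2, ← Real.rpow_add (hkpos θ t)]
        norm_num
        congr 1
        ring
      have h3 : deriv (deriv (fun x => k x t ^ α)) θ + k θ t ^ α - lam t = Ψ θ := by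
        simp only [hΨ, hΦ, hgdef]; ring
      rw [h3]
      linear_combination (α - 1) * Ψ θ * h2
    -- the integral of Ψ is zero
    have hΨint : (∫ θ in (0:ℝ)..(2 * Real.pi), Ψ θ) = 0 := by
      have hsplit : (∫ θ in (0:ℝ)..(2 * Real.pi), Ψ θ)
          = (∫ θ in (0:ℝ)..(2 * Real.pi), deriv (deriv g) θ)
            + ∫ θ in (0:ℝ)..(2 * Real.pi), Φ θ :=
        intervalIntegral.integral_add ((hg2 t).intervalIntegrable _ _)
          (hΦcont.intervalIntegrable _ _)
      have hftc : (∫ θ in (0:ℝ)..(2 * Real.pi), deriv (deriv g) θ)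
          = deriv g (2 * Real.pi) - deriv g 0 := by
        apply intervalIntegral.integral_deriv_eq_sub
        · intro x _
          exact ((hg1 t).differentiable (by simp)).differentiableAt
        · exact (hg2 t).intervalIntegrable _ _
      have hgper : ∀ x, g (x + 2 * Real.pi) = g x := fun x =>
        congrArg (fun y => y ^ α) (hper t x)
      have hdgper : deriv g (2 * Real.pi) = deriv g 0 := by
        have h1 : deriv (fun x => g (x + 2 * Real.pi)) 0 = deriv g (0 + 2 * Real.pi) :=
          deriv_comp_add_const g (2 * Real.pi) 0
        have h2 : (fun x => g (x + 2 * Real.pi)) = g := funext hgper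
        rw [h2] at h1
        rw [h1]; norm_num
      rw [hsplit, hftc, hdgper, hLP t ht]; ring
    -- Minkowski gives ∫ Φ Ψ ≤ 0
    have hMink' : (∫ θ in (0:ℝ)..(2 * Real.pi), Φ θ * Ψ θ) ≤ 0 := by
      have e2 : deriv (fun x : ℝ => k x t ^ α - lam t) = deriv g := by
        funext x
        exact deriv_sub_const (lam t)
      have h := hMink t ht
      rw [hLP t ht] at h
      have e3 : (∫ θ in (0:ℝ)..(2 * Real.pi),
          (k θ t ^ α - lam t) *
            (deriv (deriv (fun x => k x t ^ α - lam t)) θ + (k θ t ^ α - lam t)))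
          = ∫ θ in (0:ℝ)..(2 * Real.pi), Φ θ * Ψ θ := by
        apply intervalIntegral.integral_congr
        intro θ _
        rw [e2]
      rw [e3] at h
      nlinarith [hπ]
    -- split ∫ k^α Ψ
    have hsplit2 : (∫ θ in (0:ℝ)..(2 * Real.pi), k θ t ^ α * Ψ θ)
        = (∫ θ in (0:ℝ)..(2 * Real.pi), Φ θ * Ψ θ)
          + lam t * ∫ θ in (0:ℝ)..(2 * Real.pi), Ψ θ := by
      rw [← intervalIntegral.integral_const_mul, ← intervalIntegral.integral_add (f := fun θ => Φ θ * Ψ θ) (g := fun θ => lam t * Ψ θ)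
        ((hΦcont.mul hΨcont).intervalIntegrable _ _)
        ((continuous_const.mul hΨcont).intervalIntegrable _ _)]
      apply intervalIntegral.integral_congr
      intro θ _
      simp only [hΦ]; ring
    have hαne : α - 1 ≠ 0 := sub_ne_zero.mpr hα1
    rw [hDt, ← mul_assoc, one_div, inv_mul_cancel₀ hαne, one_mul, hsplit2, hΨint]
    linarith [hMink']
  -- assemble
  set G : ℝ → ℝ := fun τ => (1 / (α - 1)) * Fint τ with hGdef
  have hG : ∀ t, HasDerivAt G ((1 / (α - 1)) * D t) t := fun t => (hD t).const_mul _
  have hG' : ∀ t, deriv G t = (1 / (α - 1)) * D t := fun t => (hG t).deriv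
  have hGdiff : Differentiable ℝ G := fun t => (hG t).differentiableAt
  have hanti : AntitoneOn G (Set.Ici 0) := by
    apply antitoneOn_of_deriv_nonpos (convex_Ici 0)
    · exact hGdiff.continuous.continuousOn
    · exact hGdiff.differentiableOn
    · intro x hx
      rw [interior_Ici] at hx
      rw [hG' x]
      exact hkey x hx.le
  refine ⟨?_, ?_, ?_⟩
  · intro t ht
    have : deriv G t ≤ 0 := by rw [hG' t]; exact hkey t ht
    exact this
  · intro hα' s t hs hst
    have hGle : G t ≤ G s := hanti hs (hs.trans hst) hst
    have hc : (1 : ℝ) / (α - 1) < 0 := by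
      apply div_neg_of_pos_of_neg one_pos
      linarith
    simp only [hGdef] at hGle
    nlinarith [hGle, hc]
  · intro hα' s t hs hst
    have hGle : G t ≤ G s := hanti hs (hs.trans hst) hst
    have hc : (0:ℝ) < 1 / (α - 1) := by
      apply div_pos one_pos
      linarith
    simp only [hGdef] at hGle
    nlinarith [hGle, hc]
end

section
/- Let k(θ,t) solve k_t = k²((k^α)_{θθ} + k^α − λ(t)) on S¹ × [0,∞) with α = 1 and λ(t) = L(t)^{-1}∫₀^{2π} dθ = 2π/L(t) (the area-preserving case), where L(t) = ∫₀^{2π}k^{-1}dθ, and suppose the Minkowski-type inequality 2A∫₀^{2π}Φ(Φ_{θθ}+Φ)dθ ≤ (∫₀^{2π}(Φ/k)dθ)² holds with Φ = k − λ(t), where A is the (constant) enclosed area. Then the integral ∫₀^{2π} log(k(θ,t)·L(t)) dθ is nonincreasing in t. -/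
open MeasureTheory Real

lemma aux_hasDerivAt_param (F F' : ℝ → ℝ → ℝ)
    (hF : Continuous fun p : ℝ × ℝ => F p.1 p.2)
    (hF' : Continuous fun p : ℝ × ℝ => F' p.1 p.2)
    (hd : ∀ t θ : ℝ, HasDerivAt (fun τ => F τ θ) (F' t θ) t) (t₀ : ℝ) :
    HasDerivAt (fun t => ∫ θ in (0:ℝ)..(2 * Real.pi), F t θ)
      (∫ θ in (0:ℝ)..(2 * Real.pi), F' t₀ θ) t₀ := by
  have hK : IsCompact ((Metric.closedBall t₀ 1) ×ˢ Set.uIcc (0:ℝ) (2 * Real.pi)) :=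
    (isCompact_closedBall _ _).prod isCompact_uIcc
  obtain ⟨C, hC⟩ := hK.exists_bound_of_continuousOn hF'.continuousOn
  have res := intervalIntegral.hasDerivAt_integral_of_dominated_loc_of_deriv_le
    (F := F) (F' := F') (x₀ := t₀) (μ := volume) (a := (0:ℝ)) (b := 2 * Real.pi)
    (bound := fun _ => C) (s := Metric.ball t₀ 1) (Metric.ball_mem_nhds t₀ one_pos)
    (Filter.Eventually.of_forall fun x =>
      (hF.comp (Continuous.prodMk_right x)).aestronglyMeasurable)
    ((hF.comp (Continuous.prodMk_right t₀)).intervalIntegrable _ _)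
    ((hF'.comp (Continuous.prodMk_right t₀)).aestronglyMeasurable)
    (Filter.Eventually.of_forall fun θ hθ x hx =>
      hC (x, θ) ⟨Metric.ball_subset_closedBall hx, Set.uIoc_subset_uIcc hθ⟩)
    (_root_.intervalIntegrable_const (μ := volume) (c := C))
    (Filter.Eventually.of_forall fun θ _ x _ => hd x θ)
  exact res.2

/-- Entropy estimate for the area-preserving curve flow (`α = 1`): under
`k_t = k²(k_{θθ} + k − 2π/L(t))` with constant enclosed area `A`, the Minkowski-type
inequality with `Φ = k − λ(t)` yields that `∫₀^{2π} log(k(θ,t) L(t)) dθ` is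
nonincreasing in `t`. -/
theorem stmt_19 (k : ℝ → ℝ → ℝ)
    (hsmooth : ContDiff ℝ (⊤ : ℕ∞) (fun p : ℝ × ℝ => k p.1 p.2))
    (hper : ∀ t, Function.Periodic (fun θ => k θ t) (2 * Real.pi))
    (hkpos : ∀ θ t, 0 < k θ t)
    (L : ℝ → ℝ) (hL : ∀ t, L t = ∫ θ in (0:ℝ)..(2 * Real.pi), (k θ t)⁻¹)
    (lam : ℝ → ℝ) (hlam : ∀ t, lam t = 2 * Real.pi / L t)
    (A : ℝ) (hA : 0 < A)
    (hpde : ∀ θ t : ℝ, 0 ≤ t →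
      deriv (fun τ => k θ τ) t =
        (k θ t) ^ 2 * (deriv (deriv (fun x => k x t)) θ + k θ t - lam t))
    (hMink : ∀ t : ℝ, 0 ≤ t →
      2 * A * (∫ θ in (0:ℝ)..(2 * Real.pi),
          (k θ t - lam t) *
            (deriv (deriv (fun x => k x t - lam t)) θ + (k θ t - lam t))) ≤
        (∫ θ in (0:ℝ)..(2 * Real.pi), (k θ t - lam t) / k θ t) ^ 2) :
    ∀ s t : ℝ, 0 ≤ s → s ≤ t →
      (∫ θ in (0:ℝ)..(2 * Real.pi), Real.log (k θ t * L t)) ≤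
        ∫ θ in (0:ℝ)..(2 * Real.pi), Real.log (k θ s * L s) := by
  set f : ℝ × ℝ → ℝ := fun p => k p.1 p.2 with hf
  have hk_cont : Continuous f := hsmooth.continuous
  -- time derivative of k
  set KT : ℝ × ℝ → ℝ := fun p => fderiv ℝ f p (0, 1) with hKTdef
  have hKT_cont : Continuous KT :=
    (hsmooth.continuous_fderiv (by simp)).clm_apply continuous_const
  have hKT : ∀ θ t : ℝ, HasDerivAt (fun τ => k θ τ) (KT (θ, t)) t := by
    intro θ t
    have h1 : HasFDerivAt f (fderiv ℝ f (θ, t)) (θ, t) :=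
      (hsmooth.differentiable (by simp) (θ, t)).hasFDerivAt
    have h2 : HasDerivAt (fun τ => ((θ, τ) : ℝ × ℝ)) ((0 : ℝ), (1 : ℝ)) t :=
      (hasDerivAt_const t θ).prodMk (hasDerivAt_id t)
    exact h1.comp_hasDerivAt t h2
  have hkc : ∀ t : ℝ, Continuous fun θ => k θ t := fun t =>
    hk_cont.comp (continuous_id.prodMk continuous_const)
  have hKTc : ∀ t : ℝ, Continuous fun θ => KT (θ, t) := fun t =>
    hKT_cont.comp (continuous_id.prodMk continuous_const)
  have twopi_pos : (0 : ℝ) < 2 * Real.pi := by positivity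
  -- positivity of L
  have hLpos : ∀ t, 0 < L t := by
    intro t
    rw [hL t]
    apply intervalIntegral.intervalIntegral_pos_of_pos_on
    · exact ((hkc t).inv₀ fun θ => (hkpos θ t).ne').intervalIntegrable _ _
    · exact fun θ _ => inv_pos.mpr (hkpos θ t)
    · exact twopi_pos
  -- entropy decomposition
  set I : ℝ → ℝ := fun t => ∫ θ in (0:ℝ)..(2 * Real.pi), Real.log (k θ t) with hIdef
  have hEeq : ∀ t, (∫ θ in (0:ℝ)..(2 * Real.pi), Real.log (k θ t * L t)) =
      I t + 2 * Real.pi * Real.log (L t) := by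
    intro t
    have h1 : (∫ θ in (0:ℝ)..(2 * Real.pi), Real.log (k θ t * L t)) =
        ∫ θ in (0:ℝ)..(2 * Real.pi), (Real.log (k θ t) + Real.log (L t)) := by
      apply intervalIntegral.integral_congr
      intro θ _
      exact Real.log_mul (hkpos θ t).ne' (hLpos t).ne'
    rw [h1, intervalIntegral.integral_add
      (((hkc t).log fun θ => (hkpos θ t).ne').intervalIntegrable _ _)
      (intervalIntegrable_const), intervalIntegral.integral_const]
    simp [hIdef]
  -- derivative of I
  have hI' : ∀ t₀, HasDerivAt I
      (∫ θ in (0:ℝ)..(2 * Real.pi), KT (θ, t₀) / k θ t₀) t₀ := by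
    intro t₀
    apply aux_hasDerivAt_param (fun t θ => Real.log (k θ t))
      (fun t θ => KT (θ, t) / k θ t)
    · exact (hk_cont.comp continuous_swap).log fun p => (hkpos p.2 p.1).ne'
    · exact (hKT_cont.comp continuous_swap).div (hk_cont.comp continuous_swap)
        fun p => (hkpos p.2 p.1).ne'
    · intro t θ
      exact (hKT θ t).log (hkpos θ t).ne'
  -- derivative of L
  have hLfun : L = fun t => ∫ θ in (0:ℝ)..(2 * Real.pi), (k θ t)⁻¹ := funext hL
  have hL' : ∀ t₀, HasDerivAt L
      (∫ θ in (0:ℝ)..(2 * Real.pi), -KT (θ, t₀) / k θ t₀ ^ 2) t₀ := by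
    intro t₀
    rw [hLfun]
    apply aux_hasDerivAt_param (fun t θ => (k θ t)⁻¹)
      (fun t θ => -KT (θ, t) / k θ t ^ 2)
    · exact (hk_cont.comp continuous_swap).inv₀ fun p => (hkpos p.2 p.1).ne'
    · exact ((hKT_cont.comp continuous_swap).neg).div
        ((hk_cont.comp continuous_swap).pow 2) fun p => by
          exact pow_ne_zero _ (hkpos p.2 p.1).ne'
    · intro t θ
      exact (hKT θ t).inv (hkpos θ t).ne'
  -- the full entropy function
  set G : ℝ → ℝ := fun t => I t + 2 * Real.pi * Real.log (L t) with hGdef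
  have hG' : ∀ t₀, HasDerivAt G
      ((∫ θ in (0:ℝ)..(2 * Real.pi), KT (θ, t₀) / k θ t₀) +
        2 * Real.pi * ((∫ θ in (0:ℝ)..(2 * Real.pi), -KT (θ, t₀) / k θ t₀ ^ 2) / L t₀)) t₀ :=
    fun t₀ => (hI' t₀).add (((hL' t₀).log (hLpos t₀).ne').const_mul (2 * Real.pi))
  -- nonpositivity of the derivative for t ≥ 0
  have hDnonpos : ∀ t : ℝ, 0 ≤ t →
      (∫ θ in (0:ℝ)..(2 * Real.pi), KT (θ, t) / k θ t) +
        2 * Real.pi * ((∫ θ in (0:ℝ)..(2 * Real.pi), -KT (θ, t) / k θ t ^ 2) / L t) ≤ 0 := by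
    intro t ht
    -- ∫ Φ/k = 0
    have hphi0 : (∫ θ in (0:ℝ)..(2 * Real.pi), (k θ t - lam t) / k θ t) = 0 := by
      have h1 : (∫ θ in (0:ℝ)..(2 * Real.pi), (k θ t - lam t) / k θ t) =
          ∫ θ in (0:ℝ)..(2 * Real.pi), ((1 : ℝ) - lam t * (k θ t)⁻¹) := by
        apply intervalIntegral.integral_congr
        intro θ _
        have hkne := (hkpos θ t).ne'
        field_simp
      rw [h1, intervalIntegral.integral_sub (g := fun θ => lam t * (k θ t)⁻¹) intervalIntegrable_const
        (((hkc t).inv₀ fun θ => (hkpos θ t).ne').intervalIntegrable _ _ |>.const_mul _),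
        intervalIntegral.integral_const_mul, ← hL t, hlam t]
      have := (hLpos t).ne'
      field_simp
      simp
    -- Minkowski gives the key inequality
    have hMk := hMink t ht
    rw [hphi0] at hMk
    have hint_le : (∫ θ in (0:ℝ)..(2 * Real.pi),
        (k θ t - lam t) *
          (deriv (deriv (fun x => k x t - lam t)) θ + (k θ t - lam t))) ≤ 0 := by
      nlinarith
    -- rewrite the integrand using the PDE
    have hcongr : (∫ θ in (0:ℝ)..(2 * Real.pi),
        (k θ t - lam t) *
          (deriv (deriv (fun x => k x t - lam t)) θ + (k θ t - lam t))) =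
        ∫ θ in (0:ℝ)..(2 * Real.pi),
          (KT (θ, t) / k θ t - lam t * (KT (θ, t) / k θ t ^ 2)) := by
      apply intervalIntegral.integral_congr
      intro θ _
      show (k θ t - lam t) * (deriv (deriv (fun x => k x t - lam t)) θ + (k θ t - lam t)) =
        KT (θ, t) / k θ t - lam t * (KT (θ, t) / k θ t ^ 2)
      have hd2 : deriv (deriv (fun x => k x t - lam t)) θ =
          deriv (deriv (fun x => k x t)) θ := by
        have : (deriv fun x => k x t - lam t) = deriv fun x => k x t :=
          funext fun x => deriv_sub_const _
        rw [this]
      have hpd := hpde θ t ht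
      rw [(hKT θ t).deriv] at hpd
      have hk2 : (k θ t) ^ 2 ≠ 0 := pow_ne_zero _ (hkpos θ t).ne'
      rw [hd2]
      have hsum : deriv (deriv (fun x => k x t)) θ + (k θ t - lam t) =
          KT (θ, t) / k θ t ^ 2 := by
        rw [hpd, mul_div_cancel_left₀ _ hk2]
        ring
      rw [hsum]
      have hkne := (hkpos θ t).ne'
      field_simp
    rw [hcongr] at hint_le
    -- split the integral
    have hi1 : IntervalIntegrable (fun θ => KT (θ, t) / k θ t) volume 0 (2 * Real.pi) :=
      (((hKTc t).div (hkc t)) fun θ => (hkpos θ t).ne').intervalIntegrable _ _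
    have hi2 : IntervalIntegrable (fun θ => KT (θ, t) / k θ t ^ 2) volume 0 (2 * Real.pi) :=
      (((hKTc t).div ((hkc t).pow 2)) fun θ =>
        pow_ne_zero _ (hkpos θ t).ne').intervalIntegrable _ _
    rw [intervalIntegral.integral_sub hi1 (hi2.const_mul _),
      intervalIntegral.integral_const_mul] at hint_le
    have hneg : (∫ θ in (0:ℝ)..(2 * Real.pi), -KT (θ, t) / k θ t ^ 2) =
        -∫ θ in (0:ℝ)..(2 * Real.pi), KT (θ, t) / k θ t ^ 2 := by
      rw [← intervalIntegral.integral_neg]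
      apply intervalIntegral.integral_congr
      intro θ _
      ring
    have hLt := (hLpos t).ne'
    have h2 : 2 * Real.pi * ((-∫ θ in (0:ℝ)..(2 * Real.pi), KT (θ, t) / k θ t ^ 2) / L t) =
        -(2 * Real.pi / L t * ∫ θ in (0:ℝ)..(2 * Real.pi), KT (θ, t) / k θ t ^ 2) := by
      field_simp
    rw [hneg, h2]
    rw [hlam t] at hint_le
    linarith
  -- conclude monotonicity
  have hanti : AntitoneOn G (Set.Ici (0 : ℝ)) := by
    apply antitoneOn_of_deriv_nonpos (convex_Ici 0)
    · exact (continuous_iff_continuousAt.mpr fun x => (hG' x).continuousAt).continuousOn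
    · exact fun x _ => (hG' x).differentiableAt.differentiableWithinAt
    · intro x hx
      rw [interior_Ici] at hx
      rw [(hG' x).deriv]
      exact hDnonpos x hx.le
  intro s t hs hst
  rw [hEeq t, hEeq s]
  exact hanti hs (hs.trans hst) hst
end
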